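/- arXiv:1602.00458 — 3 statements merged into one kernel-verified Lean document; each statement's English description precedes it below -/
import Mathlib

section
/- Let K, s be natural numbers, N an integer with 0 ≤ N, and β : Fin K → ℤ → (Fin s → ℤ) → Prop a family of predicates forming a partition, i.e. for every x : ℤ and every u : Fin s → ℤ there is exactly one l : Fin K with β l x u. Let z : Fin K → ℕ. Then the following are equivalent: (A) there exists a function a : ℤ → (Fin s → ℤ) such that for every l : Fin K, the cardinality of {x : ℤ | 0 ≤ x ∧ x < N ∧ β l x (a x)} equals z l; (B) there exists w : Fin K → Finset (Fin K) → ℕ such that (i) for every S : Finset (Fin K), the cardinality of {x : ℤ | 0 ≤ x ∧ x < N ∧ {l : Fin K | ∃ u, β l x u} = ↑S} equals the sum over l ∈ S of w l S, and (ii) for every l : Fin K, z l equals the sum over all S : Finset (Fin K) with l ∈ S of w l S. -/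
/-!
Position `x` admits exactly the labels `T x = {l | ∃ u, β l x u}`, and since the `β l x`
partition the values, choosing the array values `a x` amounts to choosing a label `f x ∈ T x`
for every position. Such a labeling is summarised by `w l S`, the number of positions with
`T x = S` and label `l`; these numbers satisfy both constraints. Conversely, any `w` satisfying
the first constraint is realised by distributing, for every `S`, the positions with `T x = S`
among the labels `l ∈ S` in the prescribed amounts, and then the second constraint gives the
label counts `z l`.
-/

open Finset

theorem Finset.exists_mapsTo_card_filter_eq {α γ : Type*} [DecidableEq γ] [Nonempty γ]
    (s : Finset α) (t : Finset γ) (c : γ → ℕ) (h : #s = ∑ b ∈ t, c b) :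
    ∃ g : α → γ, Set.MapsTo g s t ∧ ∀ b ∈ t, #{x ∈ s | g x = b} = c b := by
  classical
  induction t using Finset.induction generalizing s with
  | empty =>
    rw [sum_empty, card_eq_zero] at h
    subst h
    exact ⟨fun _ => Classical.arbitrary γ, by simp, by simp⟩
  | @insert b t hb ih =>
    rw [sum_insert hb] at h
    obtain ⟨s₁, hs₁, hcard₁⟩ := exists_subset_card_eq (s := s) (n := c b) (by omega)
    obtain ⟨g, hg, hcard⟩ := ih (s \ s₁) (by rw [card_sdiff_of_subset hs₁]; omega)
    have hg_ne : ∀ x ∈ s, x ∉ s₁ → g x ≠ b := fun x hx hx₁ hgx =>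
      hb (hgx ▸ hg (mem_sdiff.2 ⟨hx, hx₁⟩))
    refine ⟨fun x => if x ∈ s₁ then b else g x, fun x hx => ?_, fun b' hb' => ?_⟩
    · by_cases hx₁ : x ∈ s₁
      · simp [hx₁]
      · simpa [hx₁] using mem_insert_of_mem (hg (mem_sdiff.2 ⟨hx, hx₁⟩))
    obtain rfl | hb't := mem_insert.1 hb'
    · rw [← hcard₁]
      congr 1
      ext x
      by_cases hx₁ : x ∈ s₁
      · simp [hx₁, hs₁ hx₁]
      · simpa [hx₁] using hg_ne x
    · rw [← hcard b' hb't]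
      congr 1
      ext x
      have hbb' : b ≠ b' := fun h => hb (h ▸ hb't)
      by_cases hx₁ : x ∈ s₁ <;> simp [hx₁, hbb']

section Labeling

variable {α γ : Type*} [DecidableEq γ] {s : Finset α} {T : α → Finset γ} {f : α → γ}

theorem card_filter_eq_sum_card_filter_label (hf : ∀ x ∈ s, f x ∈ T x) (S : Finset γ) :
    #{x ∈ s | T x = S} = ∑ l ∈ S, #{x ∈ s | T x = S ∧ f x = l} := by
  rw [card_eq_sum_card_fiberwise fun x hx => (mem_filter.1 hx).2 ▸ hf x (mem_filter.1 hx).1]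
  simp only [filter_filter]

theorem card_filter_label_eq_sum_card_filter [Fintype γ] (hf : ∀ x ∈ s, f x ∈ T x) (l : γ) :
    #{x ∈ s | f x = l} = ∑ S with l ∈ S, #{x ∈ s | T x = S ∧ f x = l} := by
  rw [card_eq_sum_card_fiberwise (f := T) (t := {S | l ∈ S})
    fun x hx => by simpa [← (mem_filter.1 hx).2] using hf x (mem_filter.1 hx).1]
  simp only [filter_filter, and_comm]

theorem exists_labeling_of_card_filter_eq_sum [Nonempty γ] (w : γ → Finset γ → ℕ)
    (hw : ∀ S, #{x ∈ s | T x = S} = ∑ l ∈ S, w l S) :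
    ∃ f : α → γ, (∀ x ∈ s, f x ∈ T x) ∧
      ∀ S, ∀ l ∈ S, #{x ∈ s | T x = S ∧ f x = l} = w l S := by
  choose g hg hcard using fun S => exists_mapsTo_card_filter_eq {x ∈ s | T x = S} S _ (hw S)
  refine ⟨fun x => g (T x) x, fun x hx => hg (T x) (mem_filter.2 ⟨hx, rfl⟩),
    fun S l hl => ?_⟩
  rw [← hcard S l hl, filter_filter]
  congr 1
  exact filter_congr fun x _ => by constructor <;> rintro ⟨rfl, h⟩ <;> exact ⟨rfl, h⟩

theorem exists_labeling_iff_exists_weights [Fintype γ] [Nonempty γ] (z : γ → ℕ) :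
    (∃ f : α → γ, (∀ x ∈ s, f x ∈ T x) ∧ ∀ l, #{x ∈ s | f x = l} = z l) ↔
      ∃ w : γ → Finset γ → ℕ, (∀ S, #{x ∈ s | T x = S} = ∑ l ∈ S, w l S) ∧
        ∀ l, z l = ∑ S with l ∈ S, w l S := by
  constructor
  · rintro ⟨f, hf, hz⟩
    refine ⟨fun l S => #{x ∈ s | T x = S ∧ f x = l},
      card_filter_eq_sum_card_filter_label hf, fun l => ?_⟩
    rw [← hz, card_filter_label_eq_sum_card_filter hf]
  · rintro ⟨w, hw, hz⟩
    obtain ⟨f, hf, hcard⟩ := exists_labeling_of_card_filter_eq_sum w hw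
    refine ⟨f, hf, fun l => ?_⟩
    rw [hz, card_filter_label_eq_sum_card_filter hf]
    exact sum_congr rfl fun S hS => hcard S l (mem_filter.1 hS).2

end Labeling

theorem exists_values_iff_exists_labeling {α γ U : Type*} [DecidableEq γ] [Nonempty U]
    {β : γ → α → U → Prop} [∀ l x u, Decidable (β l x u)] (hpart : ∀ x u, ∃! l, β l x u)
    {T : α → Finset γ} (hT : ∀ x l, l ∈ T x ↔ ∃ u, β l x u) (s : Finset α) (z : γ → ℕ) :
    (∃ a : α → U, ∀ l, #{x ∈ s | β l x (a x)} = z l) ↔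
      ∃ f : α → γ, (∀ x ∈ s, f x ∈ T x) ∧ ∀ l, #{x ∈ s | f x = l} = z l := by
  constructor
  · rintro ⟨a, hz⟩
    choose f hf hf_unique using fun x => hpart x (a x)
    refine ⟨f, fun x _ => (hT x (f x)).2 ⟨a x, hf x⟩, fun l => ?_⟩
    rw [← hz]
    exact congrArg card <| filter_congr fun x _ =>
      ⟨fun h => h ▸ hf x, fun h => (hf_unique x l h).symm⟩
  · rintro ⟨f, hf, hz⟩
    choose! a ha using fun x hx => (hT x (f x)).1 (hf x hx)
    refine ⟨a, fun l => ?_⟩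
    rw [← hz]
    exact congrArg card <| filter_congr fun x hx =>
      ⟨fun h => (hpart x (a x)).unique (ha x hx) h, fun h => h ▸ ha x hx⟩

theorem ncard_setOf_le_and_lt_and {α : Type*} [Preorder α] [LocallyFiniteOrder α] (a b : α)
    (P : α → Prop) [DecidablePred P] :
    {x | a ≤ x ∧ x < b ∧ P x}.ncard = #{x ∈ Ico a b | P x} := by
  rw [← Set.ncard_coe_finset]
  congr 1
  ext x
  simp [and_assoc]

theorem stmt_1_general (K s : ℕ) (N : ℤ)
    (β : Fin K → ℤ → (Fin s → ℤ) → Prop)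
    (hpart : ∀ (x : ℤ) (u : Fin s → ℤ), ∃! l : Fin K, β l x u)
    (z : Fin K → ℕ) :
    (∃ a : ℤ → (Fin s → ℤ),
        ∀ l : Fin K, Set.ncard {x : ℤ | 0 ≤ x ∧ x < N ∧ β l x (a x)} = z l) ↔
      (∃ w : Fin K → Finset (Fin K) → ℕ,
        (∀ S : Finset (Fin K),
            Set.ncard {x : ℤ | 0 ≤ x ∧ x < N ∧ {l : Fin K | ∃ u, β l x u} = ↑S} =
              ∑ l ∈ S, w l S) ∧
        (∀ l : Fin K,
            z l = ∑ S ∈ Finset.univ.filter (fun S : Finset (Fin K) => l ∈ S), w l S)) := by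
  classical
  obtain ⟨l₀, -⟩ := hpart 0 0
  have : Nonempty (Fin K) := ⟨l₀⟩
  let T : ℤ → Finset (Fin K) := fun x => {l | ∃ u, β l x u}
  have hT : ∀ x (S : Finset (Fin K)), {l : Fin K | ∃ u, β l x u} = ↑S ↔ T x = S :=
    fun x S => by rw [← coe_inj, coe_filter_univ]
  simp only [hT, ncard_setOf_le_and_lt_and]
  rw [exists_values_iff_exists_labeling hpart (T := T) (by simp [T]),
    exists_labeling_iff_exists_weights]

theorem stmt_1 (K s : ℕ) (N : ℤ) (hN : 0 ≤ N)
    (β : Fin K → ℤ → (Fin s → ℤ) → Prop)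
    (hpart : ∀ (x : ℤ) (u : Fin s → ℤ), ∃! l : Fin K, β l x u)
    (z : Fin K → ℕ) :
    (∃ a : ℤ → (Fin s → ℤ),
        ∀ l : Fin K, Set.ncard {x : ℤ | 0 ≤ x ∧ x < N ∧ β l x (a x)} = z l) ↔
      (∃ w : Fin K → Finset (Fin K) → ℕ,
        (∀ S : Finset (Fin K),
            Set.ncard {x : ℤ | 0 ≤ x ∧ x < N ∧ {l : Fin K | ∃ u, β l x u} = ↑S} =
              ∑ l ∈ S, w l S) ∧
        (∀ l : Fin K,
            z l = ∑ S ∈ Finset.univ.filter (fun S : Finset (Fin K) => l ∈ S), w l S)) :=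
  stmt_1_general K s N β hpart z
end

section
/- Let m, K, s be natural numbers, N an integer with 0 ≤ N, w : Fin m → (Fin s → ℤ) a tuple of prescribed value vectors, β : Fin K → (Fin s → ℤ) → Prop a family of predicates on value tuples, and z : Fin K → ℕ. Then the following are equivalent: (A) there exist a function a : ℤ → (Fin s → ℤ) and an injective map y : Fin m → ℤ with 0 ≤ y j ∧ y j < N and a (y j) = w j for every j : Fin m, such that for every l : Fin K the cardinality of {x : ℤ | 0 ≤ x ∧ x < N ∧ β l (a x)} equals z l; (B) there exists a function a : ℤ → (Fin s → ℤ) such that for every value v in the range of w, the cardinality of {x : ℤ | 0 ≤ x ∧ x < N ∧ a x = v} is at least the number of indices j : Fin m with w j = v, and for every l : Fin K the cardinality of {x : ℤ | 0 ≤ x ∧ x < N ∧ β l (a x)} equals z l. -/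
/-!
An injective choice of named positions `y` with `a ∘ y = w` is assembled fibre by fibre: the
indices `j` with `w j = v` embed into the positions in `[0, N)` where `a` takes the value `v`
exactly when there are at least as many of the latter, and fibres over distinct values are
disjoint. The array `a` itself is the same on both sides, so the cardinality constraints carry
over unchanged.
-/

open Finset Function

theorem exists_injective_comp_eq_iff_card_fiber_le {ι β γ : Type*} [Fintype ι] [DecidableEq γ]
    (f : ι → γ) (g : β → γ) (S : Finset β) :
    (∃ y : ι → β, Injective y ∧ ∀ i, y i ∈ S ∧ g (y i) = f i) ↔
      ∀ i, #{j | f j = f i} ≤ #{x ∈ S | g x = f i} := by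
  constructor
  · rintro ⟨y, hy, hyS⟩ i
    refine card_le_card_of_injOn y (fun j hj => ?_) hy.injOn
    simp only [coe_filter, mem_univ, true_and, Set.mem_ofPred_eq] at hj ⊢
    exact ⟨(hyS j).1, (hyS j).2.trans hj⟩
  · intro hcard
    have hemb : ∀ c, Nonempty ({i // f i = c} ↪ {x ∈ S | g x = c}) := by
      intro c
      refine Function.Embedding.nonempty_of_card_le ?_
      rw [Fintype.card_subtype, Fintype.card_coe]
      by_cases hc : ∃ i, f i = c
      · obtain ⟨i, rfl⟩ := hc
        exact hcard i
      · simp_all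
    have e : ∀ c, {i // f i = c} ↪ {x ∈ S | g x = c} := fun c => (hemb c).some
    have he : ∀ c i (hi : f i = c), ((e c ⟨i, hi⟩ : β) ∈ S ∧ g (e c ⟨i, hi⟩) = f i) := by
      intro c i hi
      have := (e c ⟨i, hi⟩).2
      rw [mem_filter] at this
      exact ⟨this.1, this.2.trans hi.symm⟩
    refine ⟨fun i => e (f i) ⟨i, rfl⟩, fun i j hij => ?_, fun i => he _ i rfl⟩
    -- Generalizing the fibre indices avoids transporting `e (f i)` along `f i = f j`.
    have key : ∀ c c' (hi : f i = c) (hj : f j = c'),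
        (e c ⟨i, hi⟩ : β) = e c' ⟨j, hj⟩ → i = j := by
      intro c c' hi hj h
      obtain rfl : c = c' := by rw [← hi, ← hj, ← (he c i hi).2, ← (he c' j hj).2, h]
      simpa using (e c).injective (Subtype.ext h)
    exact key _ _ rfl rfl hij

theorem exists_injective_Ico_comp_eq_iff {ι α : Type*} [Fintype ι] [DecidableEq α]
    (w : ι → α) (a : ℤ → α) (N : ℤ) :
    (∃ y : ι → ℤ, Injective y ∧ ∀ j, 0 ≤ y j ∧ y j < N ∧ a (y j) = w j) ↔
      ∀ v ∈ Set.range w, #{j | w j = v} ≤ {x : ℤ | 0 ≤ x ∧ x < N ∧ a x = v}.ncard := by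
  have hfiber : ∀ v, {x : ℤ | 0 ≤ x ∧ x < N ∧ a x = v}.ncard = #{x ∈ Ico 0 N | a x = v} := by
    intro v
    rw [← Set.ncard_coe_finset]
    congr 1
    ext x
    simp [and_assoc]
  simp only [Set.forall_mem_range, hfiber, ← exists_injective_comp_eq_iff_card_fiber_le w a,
    mem_Ico, and_assoc]

theorem stmt_3_general (m K s : ℕ) (N : ℤ)
    (w : Fin m → (Fin s → ℤ)) (β : Fin K → (Fin s → ℤ) → Prop) (z : Fin K → ℕ) :
    (∃ (a : ℤ → (Fin s → ℤ)) (y : Fin m → ℤ),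
        Function.Injective y ∧
        (∀ j : Fin m, 0 ≤ y j ∧ y j < N ∧ a (y j) = w j) ∧
        (∀ l : Fin K, Set.ncard {x : ℤ | 0 ≤ x ∧ x < N ∧ β l (a x)} = z l)) ↔
      (∃ a : ℤ → (Fin s → ℤ),
        (∀ v ∈ Set.range w,
            (Finset.univ.filter (fun j : Fin m => w j = v)).card ≤
              Set.ncard {x : ℤ | 0 ≤ x ∧ x < N ∧ a x = v}) ∧
        (∀ l : Fin K, Set.ncard {x : ℤ | 0 ≤ x ∧ x < N ∧ β l (a x)} = z l)) := by
  simp_rw [← exists_injective_Ico_comp_eq_iff]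
  exact ⟨fun ⟨a, y, hy, hyw, hβ⟩ => ⟨a, ⟨y, hy, hyw⟩, hβ⟩,
    fun ⟨a, ⟨y, hy, hyw⟩, hβ⟩ => ⟨a, y, hy, hyw, hβ⟩⟩

theorem stmt_3 (m K s : ℕ) (N : ℤ) (hN : 0 ≤ N)
    (w : Fin m → (Fin s → ℤ)) (β : Fin K → (Fin s → ℤ) → Prop) (z : Fin K → ℕ) :
    (∃ (a : ℤ → (Fin s → ℤ)) (y : Fin m → ℤ),
        Function.Injective y ∧
        (∀ j : Fin m, 0 ≤ y j ∧ y j < N ∧ a (y j) = w j) ∧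
        (∀ l : Fin K, Set.ncard {x : ℤ | 0 ≤ x ∧ x < N ∧ β l (a x)} = z l)) ↔
      (∃ a : ℤ → (Fin s → ℤ),
        (∀ v ∈ Set.range w,
            (Finset.univ.filter (fun j : Fin m => w j = v)).card ≤
              Set.ncard {x : ℤ | 0 ≤ x ∧ x < N ∧ a x = v}) ∧
        (∀ l : Fin K, Set.ncard {x : ℤ | 0 ≤ x ∧ x < N ∧ β l (a x)} = z l)) :=
  stmt_3_general m K s N w β z
end

section
/- Let K, s be natural numbers, N an integer with 0 ≤ N, β : Fin K → (Fin s → ℤ) → Prop a family of predicates on value tuples, and z : Fin K → ℕ. Then the following are equivalent: (A) there exists a function a : ℤ → (Fin s → ℤ) such that for every l : Fin K, the cardinality of {x : ℤ | 0 ≤ x ∧ x < N ∧ β l (a x)} equals z l; (B) there exist a natural number h, value tuples u : Fin h → (Fin s → ℤ), and positive natural numbers v : Fin h → ℕ (∀ i, 0 < v i) such that the sum of the v i (as an integer) equals N and for every l : Fin K, z l equals the sum of v i over those i : Fin h with β l (u i). -/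
open scoped Classical

/-! A realization `a` yields (B) with one unit block per position: `u i = a i`, `v i = 1`.
Conversely, laying the blocks side by side, so that position `j < ∑ v` carries the value `u i`
of the block `i` containing it (read off through `finSigmaFinEquiv`), realizes the counts. -/

open Finset

section
variable {α : Type*}

lemma injective_fin_coe_int (n : ℕ) : Function.Injective (fun i : Fin n => (i : ℤ)) :=
  Nat.cast_injective.comp Fin.val_injective

lemma ncard_setOf_nonneg_lt_and (n : ℕ) (a : ℤ → α) (P : α → Prop) :
    {x : ℤ | 0 ≤ x ∧ x < n ∧ P (a x)}.ncard = #{i : Fin n | P (a i)} := by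
  have hset : {x : ℤ | 0 ≤ x ∧ x < n ∧ P (a x)} =
      (fun i : Fin n => (i : ℤ)) '' ↑({i : Fin n | P (a i)} : Finset (Fin n)) := by
    ext x
    constructor
    · rintro ⟨hx0, hxn, hP⟩
      lift x to ℕ using hx0
      exact ⟨⟨x, by exact_mod_cast hxn⟩, by simpa using hP, rfl⟩
    · rintro ⟨i, hi, rfl⟩
      exact ⟨by positivity, by simp, by simpa using hi⟩
  rw [hset, Set.ncard_image_of_injective _ (injective_fin_coe_int n), Set.ncard_coe_finset]

lemma card_filter_comp_finSigmaFinEquiv_symm {h : ℕ} (u : Fin h → α) (v : Fin h → ℕ)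
    (P : α → Prop) :
    #{j : Fin (∑ i, v i) | P (u (finSigmaFinEquiv.symm j).1)} = ∑ i with P (u i), v i := by
  rw [card_filter, sum_filter, ← finSigmaFinEquiv.sum_comp, Fintype.sum_sigma]
  simp

lemma exists_fun_int_eq_on_fin [Nonempty α] {n : ℕ} (g : Fin n → α) :
    ∃ a : ℤ → α, ∀ i : Fin n, a i = g i := by
  obtain ⟨a, ha⟩ := (injective_fin_coe_int n).surjective_comp_right g
  exact ⟨a, congrFun ha⟩

end

theorem stmt_4 (K s : ℕ) (N : ℤ) (hN : 0 ≤ N)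
    (β : Fin K → (Fin s → ℤ) → Prop) (z : Fin K → ℕ) :
    (∃ a : ℤ → (Fin s → ℤ),
        ∀ l : Fin K, Set.ncard {x : ℤ | 0 ≤ x ∧ x < N ∧ β l (a x)} = z l) ↔
      (∃ (h : ℕ) (u : Fin h → (Fin s → ℤ)) (v : Fin h → ℕ),
        (∀ i : Fin h, 0 < v i) ∧
        (∑ i : Fin h, (v i : ℤ)) = N ∧
        (∀ l : Fin K, z l = ∑ i ∈ Finset.univ.filter (fun i : Fin h => β l (u i)), v i)) := by
  constructor
  · rintro ⟨a, ha⟩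
    lift N to ℕ using hN
    refine ⟨N, fun i => a i, fun _ => 1, fun _ => one_pos, by simp, fun l => ?_⟩
    rw [← ha l, ncard_setOf_nonneg_lt_and, card_eq_sum_ones]
  · rintro ⟨h, u, v, -, rfl, hz⟩
    obtain ⟨a, ha⟩ :=
      exists_fun_int_eq_on_fin fun j : Fin (∑ i, v i) => u (finSigmaFinEquiv.symm j).1
    refine ⟨a, fun l => ?_⟩
    rw [← Nat.cast_sum, ncard_setOf_nonneg_lt_and, hz l,
      ← card_filter_comp_finSigmaFinEquiv_symm]
    simp only [ha]
end
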